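/- Fix δ > 0, and for each integer N ≥ 1 define f_N : [−2, ∞) → ℝ by f_N(x) = e^{N/2} N^{−(N+1)(1+δ/2)} (x+2)^{N+1} exp(−(x−1)²/(2N^{1+δ})). Then there exist C > 0 and N₀ such that for all N ≥ N₀, Σ_{j=0}^{∞} f_N(j) ≤ C N^{1/2 + 2δ/3}. -/

import Mathlib

open Real

/-- The function `f_N(x) = e^{N/2} N^{-(N+1)(1+δ/2)} (x+2)^{N+1} e^{-(x-1)²/(2N^{1+δ})}`. -/
noncomputable def fN (δ : ℝ) (N : ℕ) (x : ℝ) : ℝ :=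
  Real.exp (N / 2) * (N : ℝ) ^ (-(((N : ℝ) + 1) * (1 + δ / 2))) * (x + 2) ^ (N + 1) *
    Real.exp (-((x - 1) ^ 2 / (2 * (N : ℝ) ^ ((1 : ℝ) + δ))))

/-!
Bounding `(x + 2) ^ (N + 1)` by the exponential tangent to it at `x + 2 = N ^ (1 + δ/2)`
(that is, `y ≤ T e^{y/T - 1}`) exactly cancels the normalising factor `N^{-(N+1)(1+δ/2)}`, and
completing the square shows that `f_N(x) ≤ e^7 exp(-(x - c)² / (2 N^{1+δ}))` for a centre `c`.
A Gaussian of variance `s` sums over `ℕ` to `O(√s)`: it is at most `e^{1/2} e^{-|x - c|/√s}`,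
and that is dominated by a geometric series of ratio `e^{-1/√s}` on each side of `⌈c⌉`. Finally
`√(N^{1+δ}) = N^{1/2 + δ/2} ≤ N^{1/2 + 2δ/3}`.
-/

lemma pow_le_pow_mul_exp {y T : ℝ} (hy : 0 ≤ y) (hT : 0 < T) (n : ℕ) :
    y ^ n ≤ T ^ n * exp (n * (y / T - 1)) := by
  have h : y ≤ T * exp (y / T - 1) :=
    calc y = T * (y / T - 1 + 1) := by field_simp; ring
      _ ≤ T * exp (y / T - 1) := by gcongr; exact add_one_le_exp _
  calc y ^ n ≤ (T * exp (y / T - 1)) ^ n := by gcongr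
    _ = T ^ n * exp (n * (y / T - 1)) := by rw [mul_pow, ← exp_nat_mul]

lemma exp_neg_sq_div_le (x σ : ℝ) :
    exp (-(x ^ 2 / (2 * σ ^ 2))) ≤ exp (1 / 2) * exp (-(|x| / σ)) := by
  rw [← exp_add, exp_le_exp]
  have h : x ^ 2 / (2 * σ ^ 2) = (|x| / σ) ^ 2 / 2 := by rw [div_pow, sq_abs]; ring
  nlinarith [sq_nonneg (|x| / σ - 1)]

lemma summable_and_tsum_le_of_le_pow {g : ℕ → ℝ} (hg : 0 ≤ g) {r : ℝ} (hr0 : 0 ≤ r)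
    (hr1 : r < 1) (m : ℕ) (hlow : ∀ j < m, g j ≤ r ^ (m - 1 - j))
    (hhigh : ∀ k, g (k + m) ≤ r ^ k) :
    Summable g ∧ ∑' j, g j ≤ 2 * (1 - r)⁻¹ := by
  have hgeo : Summable (fun k : ℕ ↦ r ^ k) := summable_geometric_of_lt_one hr0 hr1
  have htail : Summable (fun k ↦ g (k + m)) := hgeo.of_nonneg_of_le (fun k ↦ hg (k + m)) hhigh
  have hsum : Summable g := (summable_nat_add_iff m).mp htail
  have hhead : ∑ j ∈ Finset.range m, g j ≤ (1 - r)⁻¹ :=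
    calc ∑ j ∈ Finset.range m, g j ≤ ∑ j ∈ Finset.range m, r ^ (m - 1 - j) :=
          Finset.sum_le_sum fun j hj ↦ hlow j (Finset.mem_range.mp hj)
      _ = ∑ i ∈ Finset.range m, r ^ i := Finset.sum_range_reflect (fun i ↦ r ^ i) m
      _ ≤ ∑' i, r ^ i := hgeo.sum_le_tsum _ fun i _ ↦ pow_nonneg hr0 i
      _ = (1 - r)⁻¹ := tsum_geometric_of_lt_one hr0 hr1
  have htail_le : ∑' k, g (k + m) ≤ (1 - r)⁻¹ :=
    (htail.tsum_le_tsum hhigh hgeo).trans_eq (tsum_geometric_of_lt_one hr0 hr1)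
  refine ⟨hsum, ?_⟩
  rw [← hsum.sum_add_tsum_nat_add m]
  linarith

lemma summable_and_tsum_exp_neg_abs_sub_le (c : ℝ) {σ : ℝ} (hσ : 0 < σ) :
    Summable (fun j : ℕ ↦ exp (-(|j - c| / σ))) ∧
      ∑' j : ℕ, exp (-(|j - c| / σ)) ≤ 2 * (1 - exp (-σ⁻¹))⁻¹ := by
  have hpow (k : ℕ) : exp (-σ⁻¹) ^ k = exp (-(k / σ)) := by
    rw [← exp_nat_mul]; ring_nf
  refine summable_and_tsum_le_of_le_pow (fun j ↦ (exp_pos _).le) (exp_pos _).le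
    (exp_lt_one_iff.mpr (by simpa using hσ)) ⌈c⌉₊ (fun j hj ↦ ?_) (fun k ↦ ?_)
  · have hc : 0 < c := Nat.ceil_pos.mp (by omega)
    have hcm := Nat.ceil_lt_add_one hc.le
    rw [hpow, exp_le_exp, neg_le_neg_iff]
    gcongr
    rw [Nat.cast_sub (by omega), Nat.cast_sub (by omega), Nat.cast_one, abs_sub_comm]
    exact (by linarith : (⌈c⌉₊ : ℝ) - 1 - j ≤ c - j).trans (le_abs_self _)
  · have hcm := Nat.le_ceil c
    rw [hpow, exp_le_exp, neg_le_neg_iff]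
    gcongr
    push_cast
    exact (by linarith : (k : ℝ) ≤ k + ⌈c⌉₊ - c).trans (le_abs_self _)

lemma inv_one_sub_exp_neg_inv_le {σ : ℝ} (hσ : 0 < σ) :
    (1 - exp (-σ⁻¹))⁻¹ ≤ σ + 1 := by
  have h : exp (-σ⁻¹) ≤ σ / (σ + 1) := by
    rw [exp_neg, show σ / (σ + 1) = (σ⁻¹ + 1)⁻¹ by field_simp; ring]
    exact inv_anti₀ (by positivity) (add_one_le_exp _)
  have h' : (σ + 1)⁻¹ ≤ 1 - exp (-σ⁻¹) := by
    rw [show (σ + 1)⁻¹ = 1 - σ / (σ + 1) by field_simp; ring]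
    linarith
  simpa using inv_anti₀ (by positivity) h'

lemma summable_and_tsum_exp_neg_sq_sub_le (c : ℝ) {s : ℝ} (hs : 0 < s) :
    Summable (fun j : ℕ ↦ exp (-((j - c) ^ 2 / (2 * s)))) ∧
      ∑' j : ℕ, exp (-((j - c) ^ 2 / (2 * s))) ≤ 2 * exp (1 / 2) * (√s + 1) := by
  have hσ : 0 < √s := sqrt_pos.mpr hs
  obtain ⟨hsum, hle⟩ := summable_and_tsum_exp_neg_abs_sub_le c hσ
  have hpt (j : ℕ) :
      exp (-((j - c) ^ 2 / (2 * s))) ≤ exp (1 / 2) * exp (-(|j - c| / √s)) := by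
    simpa [sq_sqrt hs.le] using exp_neg_sq_div_le (j - c) (√s)
  have hsum' := (hsum.mul_left (exp (1 / 2))).of_nonneg_of_le (fun j ↦ (exp_pos _).le) hpt
  refine ⟨hsum', ?_⟩
  calc ∑' j : ℕ, exp (-((j - c) ^ 2 / (2 * s)))
      ≤ ∑' j : ℕ, exp (1 / 2) * exp (-(|j - c| / √s)) :=
        hsum'.tsum_le_tsum hpt (hsum.mul_left _)
    _ ≤ exp (1 / 2) * (2 * (√s + 1)) := by
        rw [tsum_mul_left]
        gcongr
        exact hle.trans (by gcongr; exact inv_one_sub_exp_neg_inv_le hσ)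
    _ = 2 * exp (1 / 2) * (√s + 1) := by ring

lemma fN_le_exp_mul_exp_neg_sq_sub {δ : ℝ} (hδ : 0 ≤ δ) {N : ℕ} (hN : 1 ≤ N) {x : ℝ}
    (hx : -2 ≤ x) :
    fN δ N x ≤ exp 7 *
      exp (-((x - (1 + (N + 1) * (N : ℝ) ^ (δ / 2))) ^ 2 / (2 * (N : ℝ) ^ (1 + δ)))) := by
  have hN1 : (1 : ℝ) ≤ N := by exact_mod_cast hN
  have hN0 : (0 : ℝ) < N := by linarith
  -- with `u = N^{δ/2}` every power of `N` in `f_N` becomes a rational expression in `N` and `u`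
  set u := (N : ℝ) ^ (δ / 2) with hu
  have hu1 : 1 ≤ u := one_le_rpow hN1 (by positivity)
  have hT : (N : ℝ) ^ (-(((N : ℝ) + 1) * (1 + δ / 2))) = ((N * u) ^ (N + 1))⁻¹ := by
    rw [hu, ← rpow_one_add' hN0.le (by positivity), ← rpow_natCast, ← rpow_mul hN0.le,
      ← rpow_neg hN0.le]
    push_cast; ring_nf
  have hs : (N : ℝ) ^ ((1 : ℝ) + δ) = N * u ^ 2 := by
    rw [hu, ← rpow_natCast, ← rpow_mul hN0.le, ← rpow_one_add' hN0.le (by positivity)]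
    ring_nf
  have hexponent : (N : ℝ) / 2 + (N + 1) * ((x + 2) / (N * u) - 1) +
      -((x - 1) ^ 2 / (2 * (N * u ^ 2))) ≤
        7 - (x - (1 + (N + 1) * u)) ^ 2 / (2 * (N * u ^ 2)) := by
    have hcomplete_sq : (N : ℝ) / 2 + (N + 1) * ((x + 2) / (N * u) - 1) +
        -((x - 1) ^ 2 / (2 * (N * u ^ 2))) = 1 / (2 * N) + 3 * (N + 1) / (N * u) -
          (x - (1 + (N + 1) * u)) ^ 2 / (2 * (N * u ^ 2)) := by
      field_simp; ring
    have h1 : 1 / (2 * (N : ℝ)) ≤ 1 := by rw [div_le_one (by positivity)]; linarith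
    have h2 : 3 * ((N : ℝ) + 1) / (N * u) ≤ 6 := by
      rw [div_le_iff₀ (by positivity)]; nlinarith
    linarith
  unfold fN
  rw [hT, hs]
  calc exp (N / 2) * ((N * u) ^ (N + 1))⁻¹ * (x + 2) ^ (N + 1) *
        exp (-((x - 1) ^ 2 / (2 * (N * u ^ 2))))
      ≤ exp (N / 2) * ((N * u) ^ (N + 1))⁻¹ *
          ((N * u) ^ (N + 1) * exp ((N + 1 : ℕ) * ((x + 2) / (N * u) - 1))) *
          exp (-((x - 1) ^ 2 / (2 * (N * u ^ 2)))) := by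
        gcongr
        exact pow_le_pow_mul_exp (by linarith) (by positivity) _
    _ = exp ((N : ℝ) / 2 + (N + 1) * ((x + 2) / (N * u) - 1) +
          -((x - 1) ^ 2 / (2 * (N * u ^ 2)))) := by
        rw [exp_add, exp_add]; push_cast; field_simp
    _ ≤ exp 7 * exp (-((x - (1 + (N + 1) * u)) ^ 2 / (2 * (N * u ^ 2)))) := by
        rw [← exp_add, exp_le_exp]; linarith

/-- For all large `N`, `Σ_{j≥0} f_N(j) ≤ C N^{1/2 + 2δ/3}`. -/
theorem stmt_15 (δ : ℝ) (hδ : 0 < δ) :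
    ∃ C : ℝ, 0 < C ∧ ∃ N₀ : ℕ, ∀ N : ℕ, N₀ ≤ N →
      (∑' j : ℕ, fN δ N j) ≤ C * (N : ℝ) ^ ((1 : ℝ) / 2 + 2 * δ / 3) := by
  refine ⟨4 * exp (15 / 2), by positivity, 1, fun N hN ↦ ?_⟩
  have hN1 : (1 : ℝ) ≤ N := by exact_mod_cast hN
  set c := 1 + ((N : ℝ) + 1) * (N : ℝ) ^ (δ / 2)
  set s := (N : ℝ) ^ (1 + δ)
  obtain ⟨hsum, hle⟩ := summable_and_tsum_exp_neg_sq_sub_le c (s := s) (by positivity)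
  have hpt (j : ℕ) : fN δ N j ≤ exp 7 * exp (-((j - c) ^ 2 / (2 * s))) :=
    fN_le_exp_mul_exp_neg_sq_sub hδ.le hN (by linarith [j.cast_nonneg (α := ℝ)])
  have hsqrt : √s ≤ (N : ℝ) ^ ((1 : ℝ) / 2 + 2 * δ / 3) := by
    rw [sqrt_eq_rpow, ← rpow_mul (by positivity)]
    exact rpow_le_rpow_of_exponent_le hN1 (by linarith)
  have hone : 1 ≤ (N : ℝ) ^ ((1 : ℝ) / 2 + 2 * δ / 3) := one_le_rpow hN1 (by positivity)
  have hfN : Summable (fun j : ℕ ↦ fN δ N j) :=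
    (hsum.mul_left _).of_nonneg_of_le (fun j ↦ by unfold fN; positivity) hpt
  calc ∑' j : ℕ, fN δ N j ≤ ∑' j : ℕ, exp 7 * exp (-((j - c) ^ 2 / (2 * s))) :=
        hfN.tsum_le_tsum hpt (hsum.mul_left _)
    _ ≤ exp 7 * (2 * exp (1 / 2) * (2 * (N : ℝ) ^ ((1 : ℝ) / 2 + 2 * δ / 3))) := by
        rw [tsum_mul_left]; gcongr; exact hle.trans (by gcongr; linarith)
    _ = 4 * exp (15 / 2) * (N : ℝ) ^ ((1 : ℝ) / 2 + 2 * δ / 3) := by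
        rw [show (15 : ℝ) / 2 = 7 + 1 / 2 by norm_num, exp_add]; ring
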